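/- Let d ≥ 2 and N ≥ 1 with 3^N > (3/2)√d. Let n₁,…,n_N ∈ ℤ^d \ {0} be an N-sparse sequence such that every n_i satisfies |n_i^{(1)}| = max_k |n_i^{(k)}|. Then there is a constant C > 0 depending only on d (not on N or the sequence) such that for every 1 ≤ l ≤ N, every ξ ∈ {−1,0,1}^N with ξ_k = 0 for k ≥ l, every j ∈ {2,…,d} and either sign choice ±: | (n_l^{(j)} ± M(ξ)^{(j)}) / (n_l^{(1)} ± M(ξ)^{(1)}) − n_l^{(j)} / n_l^{(1)} | ≤ C / 3^N, where M(ξ) = ∑_{j=1}^N ξ_j n_j. -/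

import Mathlib

noncomputable section

open MeasureTheory Finset

/-- The open-closed unit cube `(0,1]^d` in `ℝ^d`, a fundamental domain for `𝕋^d = (ℝ/ℤ)^d`. -/
def cube (d : ℕ) : Set (Fin d → ℝ) := Set.univ.pi fun _ => Set.Ioc (0:ℝ) 1

/-- The character `e^{2πi⟨n,t⟩}` on the torus. -/
def charF (d : ℕ) (n : Fin d → ℤ) (t : Fin d → ℝ) : ℂ :=
  Complex.exp (2 * (Real.pi : ℂ) * Complex.I * ((∑ i, (n i : ℝ) * t i : ℝ) : ℂ))

/-- The trigonometric polynomial with Fourier coefficients `c` (assumed finitely supported). -/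
def trigEval {d : ℕ} (c : (Fin d → ℤ) → ℂ) (t : Fin d → ℝ) : ℂ :=
  ∑ᶠ n, c n * charF d n t

/-- The `L¹(𝕋^d)` norm of a function, computed on the fundamental domain. -/
def L1Norm (d : ℕ) (f : (Fin d → ℝ) → ℂ) : ℝ := ∫ t in cube d, ‖f t‖

/-- The `L^q(𝕋^d)` norm of a function, computed on the fundamental domain. -/
def LqNorm (d : ℕ) (q : ℝ) (f : (Fin d → ℝ) → ℂ) : ℝ :=
  (∫ t in cube d, ‖f t‖ ^ q) ^ (1/q)

/-- Fourier coefficients of the partial derivative `∂f/∂x_j`: multiplication by `2πi n_j`. -/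
def derivCoeff {d : ℕ} (j : Fin d) (c : (Fin d → ℤ) → ℂ) : (Fin d → ℤ) → ℂ :=
  fun n => (2 * (Real.pi : ℂ) * Complex.I * (n j : ℂ)) * c n

/-- The Sobolev `W^{1,1}(𝕋^d)` norm of the trigonometric polynomial with coefficients `c`:
`‖f‖₁ + ∑_j ‖∂f/∂x_j‖₁`. -/
def sobNorm (d : ℕ) (c : (Fin d → ℤ) → ℂ) : ℝ :=
  L1Norm d (trigEval c) + ∑ j : Fin d, L1Norm d (trigEval (derivCoeff j c))

/-- `lam` is a `(W^{1,1}, L^q)`-multiplier on `𝕋^d` with norm at most `C`: for every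
trigonometric polynomial `f` (given by its finitely supported coefficients `c`), the
trigonometric polynomial `Tf` with coefficients `n ↦ lam n * c n` satisfies
`‖Tf‖_{L^q} ≤ C ‖f‖_{1,1}`. -/
def IsMultiplier (d : ℕ) (q C : ℝ) (lam : (Fin d → ℤ) → ℂ) : Prop :=
  ∀ c : (Fin d → ℤ) → ℂ, (Function.support c).Finite →
    LqNorm d q (trigEval fun n => lam n * c n) ≤ C * sobNorm d c

/-- The Euclidean norm `|n|₂` of `n ∈ ℤ^d`. -/
def eucNorm (d : ℕ) (n : Fin d → ℤ) : ℝ := Real.sqrt (∑ i, ((n i : ℝ))^2)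

/-- The `k`-th triadic ring `R_k = {n ∈ ℤ^d : 3^k ≤ max_i |n_i| < 3^{k+1}}`. -/
def triadicRing (d k : ℕ) : Set (Fin d → ℤ) :=
  {n | 3^k ≤ Finset.univ.sup (fun i => (n i).natAbs) ∧
       Finset.univ.sup (fun i => (n i).natAbs) < 3^(k+1)}


/-- `M(ξ) = ∑_j ξ_j n_j ∈ ℤ^d` for a sign pattern `ξ ∈ {-1,0,1}^N`. -/
def Mvec {d N : ℕ} (n : Fin N → Fin d → ℤ) (ξ : Fin N → SignType) : Fin d → ℤ :=
  fun i => ∑ j, (ξ j : ℤ) * n j i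

/-- `L(ξ) = ∑_j |ξ_j|`, the number of nonzero coordinates of `ξ ∈ {-1,0,1}^N`. -/
def Lnum {N : ℕ} (ξ : Fin N → SignType) : ℕ := ∑ j, ((ξ j : ℤ)).natAbs

/-- The sequence `n₁, …, n_N` is `N`-sparse: `|n_{j+1}|₂ / |n_j|₂ ≥ 3^N`. -/
def Sparse (d N : ℕ) (n : Fin N → Fin d → ℤ) : Prop :=
  ∀ (j : ℕ) (h : j + 1 < N),
    (3:ℝ)^N * eucNorm d (n ⟨j, by omega⟩) ≤ eucNorm d (n ⟨j + 1, h⟩)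

lemma eucNorm_nonneg' (d : ℕ) (v : Fin d → ℤ) : 0 ≤ eucNorm d v := Real.sqrt_nonneg _

lemma abs_coord_le_eucNorm' (d : ℕ) (v : Fin d → ℤ) (i : Fin d) :
    |(v i : ℝ)| ≤ eucNorm d v := by
  rw [← Real.sqrt_sq_eq_abs]
  exact Real.sqrt_le_sqrt
    (Finset.single_le_sum (f := fun k => ((v k : ℝ))^2) (fun k _ => sq_nonneg _) (Finset.mem_univ i))

lemma eucNorm_eq_norm' (d : ℕ) (v : Fin d → ℤ) :
    eucNorm d v = ‖(WithLp.equiv 2 (Fin d → ℝ)).symm (fun i => (v i : ℝ))‖ := by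
  rw [EuclideanSpace.norm_eq, eucNorm]
  congr 1
  refine Finset.sum_congr rfl fun i _ => ?_
  simp [Real.norm_eq_abs, sq_abs]

lemma eucNorm_Mvec_le' {d N : ℕ} (n : Fin N → Fin d → ℤ) (ξ : Fin N → SignType) :
    eucNorm d (Mvec n ξ) ≤ ∑ k, |((ξ k : ℤ) : ℝ)| * eucNorm d (n k) := by
  rw [eucNorm_eq_norm']
  have h : (WithLp.equiv 2 (Fin d → ℝ)).symm (fun i => ((Mvec n ξ i : ℤ) : ℝ))
      = ∑ k, ((ξ k : ℤ) : ℝ) • (WithLp.equiv 2 (Fin d → ℝ)).symm (fun i => ((n k i : ℤ) : ℝ)) := by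
    ext i
    rw [WithLp.ofLp_sum, Finset.sum_apply i Finset.univ
      (fun x : Fin N => (((ξ x : ℤ):ℝ) • (WithLp.equiv 2 (Fin d → ℝ)).symm fun i => ((n x i : ℤ):ℝ)).ofLp)]
    simp only [WithLp.equiv_symm_apply, WithLp.ofLp_smul, WithLp.ofLp_toLp, Pi.smul_apply, smul_eq_mul, Mvec]
    push_cast
    rfl
  rw [h]
  refine (norm_sum_le _ _).trans ?_
  refine Finset.sum_le_sum fun k _ => ?_
  rw [norm_smul, eucNorm_eq_norm']
  simp [Real.norm_eq_abs]


set_option maxHeartbeats 1000000 in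
/-- there is `C > 0` depending only on `d` such that for every `N ≥ 1` with
`3^N > (3/2)√d`, every `N`-sparse sequence `n₁, …, n_N ∈ ℤ^d \ {0}` with dominant first
coordinates, every `l`, every `ξ ∈ {-1,0,1}^N` vanishing on indices `≥ l`, every
`j ∈ {2,…,d}` and either sign `s = ±1`:
`|(n_l^{(j)} + s·M(ξ)^{(j)}) / (n_l^{(1)} + s·M(ξ)^{(1)}) − n_l^{(j)}/n_l^{(1)}| ≤ C/3^N`. -/
theorem stmt9 (d : ℕ) (hd : 2 ≤ d) :
    ∃ C > 0, ∀ N : ℕ, 1 ≤ N → (3:ℝ)^N > 3/2 * Real.sqrt d →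
      ∀ n : Fin N → Fin d → ℤ, (∀ j, n j ≠ 0) → Sparse d N n →
      (∀ i : Fin N, ∀ k : Fin d, (n i k).natAbs ≤ (n i ⟨0, by omega⟩).natAbs) →
      ∀ (l : Fin N) (ξ : Fin N → SignType), (∀ k : Fin N, l ≤ k → ξ k = 0) →
      ∀ j : Fin d, j ≠ ⟨0, by omega⟩ →
      ∀ s : ℤ, s = 1 ∨ s = -1 →
        |((n l j : ℝ) + (s : ℝ) * (Mvec n ξ j : ℤ)) /
            ((n l ⟨0, by omega⟩ : ℝ) + (s : ℝ) * (Mvec n ξ ⟨0, by omega⟩ : ℤ)) -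
          (n l j : ℝ) / (n l ⟨0, by omega⟩ : ℝ)| ≤ C / 3^N := by
  have hds : (0:ℝ) < Real.sqrt d :=
    Real.sqrt_pos.2 (by exact_mod_cast (by omega : 0 < d))
  have hP : ∃ m : ℕ, 1 ≤ m ∧ 3/2 * Real.sqrt d < (3:ℝ)^m := by
    obtain ⟨m, hm⟩ := pow_unbounded_of_one_lt (3/2 * Real.sqrt d) (by norm_num : (1:ℝ) < 3)
    exact ⟨m + 1, by omega,
      hm.trans_le (pow_le_pow_right₀ (by norm_num) (Nat.le_succ m))⟩
  set N₀ := Nat.find hP with hN₀def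
  obtain ⟨hN₀1, hN₀3⟩ := Nat.find_spec hP
  set θ₀ : ℝ := 3/2 * Real.sqrt d / 3^N₀ with hθ₀def
  have h3N₀pos : (0:ℝ) < 3^N₀ := by positivity
  have hθ₀lt : θ₀ < 1 := (div_lt_one h3N₀pos).2 hN₀3
  have hθ₀pos : 0 < θ₀ := by positivity
  have h1θ₀ : (0:ℝ) < 1 - θ₀ := by linarith
  clear_value N₀ θ₀
  refine ⟨3 * Real.sqrt d / (1 - θ₀), div_pos (by positivity) h1θ₀, ?_⟩
  intro N hN1 hN3 n hn0 hsp hdom l ξ hξ j hj s hs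
  have hNN₀ : N₀ ≤ N := by rw [hN₀def]; exact Nat.find_min' hP ⟨hN1, hN3⟩
  have h3Npos : (0:ℝ) < 3^N := by positivity
  have h3N3 : (3:ℝ) ≤ 3^N := by
    calc (3:ℝ) = 3^1 := (pow_one 3).symm
    _ ≤ 3^N := pow_le_pow_right₀ (by norm_num) hN1
  set i0 : Fin d := ⟨0, by omega⟩ with hi0def
  set θ : ℝ := 3/2 * Real.sqrt d / 3^N with hθdef
  have hθθ₀ : θ ≤ θ₀ := by
    rw [hθdef, hθ₀def]
    apply div_le_div_of_nonneg_left (by positivity) h3N₀pos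
    exact pow_le_pow_right₀ (by norm_num) hNN₀
  have hθpos : 0 < θ := by rw [hθdef]; positivity
  clear_value θ
  set b : ℝ := ((n l i0 : ℤ) : ℝ) with hbdef
  set a : ℝ := ((n l j : ℤ) : ℝ) with hadef
  set u : ℝ := ((Mvec n ξ j : ℤ) : ℝ) with hudef
  set v : ℝ := ((Mvec n ξ i0 : ℤ) : ℝ) with hvdef
  clear_value b a u v
  -- b is a nonzero integer
  have hbz : n l i0 ≠ 0 := by
    intro h0
    apply hn0 l
    funext k
    have h1 := hdom l k
    rw [h0] at h1
    simp only [Int.natAbs_zero, Nat.le_zero] at h1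
    simpa using Int.natAbs_eq_zero.mp h1
  have hb1 : (1:ℝ) ≤ |b| := by
    rw [hbdef, ← Int.cast_abs]
    exact_mod_cast Int.one_le_abs hbz
  have hbpos : (0:ℝ) < |b| := by linarith
  -- dominance: |a| ≤ |b|, and eucNorm (n l) ≤ √d |b|
  have hdomR : ∀ k : Fin d, |((n l k : ℤ):ℝ)| ≤ |b| := by
    intro k
    rw [hbdef, ← Int.cast_abs, ← Int.cast_abs, Int.cast_le, Int.abs_eq_natAbs, Int.abs_eq_natAbs]
    exact_mod_cast hdom l k
  have hab : |a| ≤ |b| := by rw [hadef]; exact hdomR j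
  have hnl : eucNorm d (n l) ≤ Real.sqrt d * |b| := by
    rw [eucNorm]
    have h1 : ∑ i, ((n l i : ℝ))^2 ≤ ∑ _i : Fin d, b^2 := by
      refine Finset.sum_le_sum fun i _ => ?_
      calc ((n l i : ℝ))^2 = |((n l i : ℤ):ℝ)|^2 := (sq_abs _).symm
      _ ≤ |b|^2 := by
          have := hdomR i
          nlinarith [abs_nonneg ((n l i : ℤ):ℝ)]
      _ = b^2 := sq_abs _
    calc Real.sqrt (∑ i, ((n l i : ℝ))^2) ≤ Real.sqrt (∑ _i : Fin d, b^2) :=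
        Real.sqrt_le_sqrt h1
    _ = Real.sqrt ((d : ℝ) * b^2) := by
        rw [Finset.sum_const, card_univ, Fintype.card_fin, nsmul_eq_mul]
    _ = Real.sqrt d * |b| := by
        rw [Real.sqrt_mul (by positivity), Real.sqrt_sq_eq_abs]
  -- sparse chain
  have echain : ∀ m k : ℕ, ∀ (h : k + m < N),
      (3:ℝ)^(N*m) * eucNorm d (n ⟨k, by omega⟩) ≤ eucNorm d (n ⟨k + m, h⟩) := by
    intro m
    induction m with
    | zero => intro k h; simp
    | succ m ih =>
      intro k h
      have h1 : k + m < N := by omega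
      have h2 := hsp (k + m) (by omega)
      have h3 := ih k h1
      calc (3:ℝ)^(N*(m+1)) * eucNorm d (n ⟨k, by omega⟩)
          = 3^N * ((3:ℝ)^(N*m) * eucNorm d (n ⟨k, by omega⟩)) := by
            rw [Nat.mul_succ, pow_add]; ring
      _ ≤ 3^N * eucNorm d (n ⟨k + m, h1⟩) := by
            exact mul_le_mul_of_nonneg_left h3 (le_of_lt h3Npos)
      _ ≤ eucNorm d (n ⟨k + m + 1, by omega⟩) := h2
      _ = eucNorm d (n ⟨k + (m + 1), h⟩) := by congr 1
  -- geometric bound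
  set E : ℕ → ℝ := fun k => if h : k < N then eucNorm d (n ⟨k, h⟩) else 0 with hEdef
  clear_value E
  have hE0 : ∀ k, 0 ≤ E k := by
    intro k
    rw [hEdef]
    dsimp only
    split
    · exact eucNorm_nonneg' _ _
    · exact le_refl 0
  have hgeom : ∀ L : ℕ, L < N → (3:ℝ)^N * ∑ k ∈ Finset.range L, E k ≤ 3/2 * E L := by
    intro L
    induction L with
    | zero =>
        intro _
        simpa using mul_nonneg (by norm_num : (0:ℝ) ≤ 3/2) (hE0 0)
    | succ L ih =>
      intro hL
      have hL' : L < N := by omega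
      have h1 := ih hL'
      have h2 : (3:ℝ)^N * E L ≤ E (L + 1) := by
        have := hsp L (by omega)
        rw [hEdef]
        simp only [dif_pos hL', dif_pos hL]
        exact this
      rw [Finset.sum_range_succ, mul_add]
      linarith [h1, mul_le_mul_of_nonneg_left h2 (by norm_num : (0:ℝ) ≤ 3/2),
        mul_le_mul_of_nonneg_right h3N3 (hE0 L)]
  -- bound on coordinates of M
  have hM : ∀ i : Fin d, |((Mvec n ξ i : ℤ):ℝ)| ≤ θ * |b| := by
    intro i
    have s1 : |((Mvec n ξ i : ℤ):ℝ)| ≤ eucNorm d (Mvec n ξ) := abs_coord_le_eucNorm' d _ i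
    have s2 := eucNorm_Mvec_le' n ξ
    have s3 : ∑ k : Fin N, |((ξ k : ℤ) : ℝ)| * eucNorm d (n k) ≤ ∑ k ∈ Finset.range l.val, E k := by
      have e1 : ∑ k : Fin N, |((ξ k : ℤ) : ℝ)| * eucNorm d (n k)
          = ∑ k ∈ Finset.range N, (fun m : ℕ =>
              if h : m < N then |((ξ ⟨m, h⟩ : ℤ) : ℝ)| * eucNorm d (n ⟨m, h⟩) else 0) k := by
        rw [← Fin.sum_univ_eq_sum_range]
        refine Finset.sum_congr rfl fun k _ => ?_
        simp [k.isLt]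
      rw [e1]
      have e2 : ∑ k ∈ Finset.range N, (fun m : ℕ =>
              if h : m < N then |((ξ ⟨m, h⟩ : ℤ) : ℝ)| * eucNorm d (n ⟨m, h⟩) else 0) k
          = ∑ k ∈ Finset.range l.val, (fun m : ℕ =>
              if h : m < N then |((ξ ⟨m, h⟩ : ℤ) : ℝ)| * eucNorm d (n ⟨m, h⟩) else 0) k := by
        refine (Finset.sum_subset (Finset.range_subset_range.2 l.isLt.le) ?_).symm
        intro x hx hxl
        have hxN : x < N := Finset.mem_range.mp hx
        have hlx : l ≤ (⟨x, hxN⟩ : Fin N) := by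
          simp only [Fin.le_def]
          exact Nat.le_of_not_lt (fun hc => hxl (Finset.mem_range.mpr hc))
        have := hξ ⟨x, hxN⟩ hlx
        simp [hxN, this]
      rw [e2]
      refine Finset.sum_le_sum fun k hk => ?_
      have hkN : k < N := lt_of_lt_of_le (Finset.mem_range.mp hk) l.isLt.le
      rw [hEdef]
      simp only [dif_pos hkN]
      have hξ1 : |((ξ ⟨k, hkN⟩ : ℤ) : ℝ)| ≤ 1 := by
        rcases (ξ ⟨k, hkN⟩) with _ | _ | _ <;> norm_num
      calc |((ξ ⟨k, hkN⟩ : ℤ) : ℝ)| * eucNorm d (n ⟨k, hkN⟩)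
          ≤ 1 * eucNorm d (n ⟨k, hkN⟩) :=
            mul_le_mul_of_nonneg_right hξ1 (eucNorm_nonneg' _ _)
      _ = eucNorm d (n ⟨k, hkN⟩) := one_mul _
    have s4 : ∑ k ∈ Finset.range l.val, E k ≤ 3/2 * E l.val / 3^N := by
      rw [le_div_iff₀ h3Npos]
      linarith [hgeom l.val l.isLt]
    have s5 : E l.val = eucNorm d (n l) := by
      rw [hEdef]
      simp only [dif_pos l.isLt, Fin.eta]
    calc |((Mvec n ξ i : ℤ):ℝ)| ≤ 3/2 * E l.val / 3^N := le_trans s1 (le_trans s2 (le_trans s3 s4))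
    _ ≤ 3/2 * (Real.sqrt d * |b|) / 3^N := by
        have h6 : 3/2 * E l.val ≤ 3/2 * (Real.sqrt d * |b|) := by
          have := s5.le.trans hnl
          linarith
        exact div_le_div_of_nonneg_right h6 h3Npos.le
    _ = θ * |b| := by rw [hθdef]; ring
  have hu : |u| ≤ θ * |b| := by rw [hudef]; exact hM j
  have hv : |v| ≤ θ * |b| := by rw [hvdef]; exact hM i0
  -- denominator
  have hden : (1 - θ₀) * |b| ≤ |b + (s:ℝ) * v| := by
    have hsv : |(s:ℝ) * v| = |v| := by
      rcases hs with h | h <;> rw [h] <;> simp [abs_mul]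
    have h1 : |b| ≤ |b + (s:ℝ) * v| + |v| := by
      calc |b| = |(b + (s:ℝ) * v) - (s:ℝ) * v| := by congr 1; ring
      _ ≤ |b + (s:ℝ) * v| + |(s:ℝ) * v| := abs_sub _ _
      _ = |b + (s:ℝ) * v| + |v| := by rw [hsv]
    have h2 : θ * |b| ≤ θ₀ * |b| := mul_le_mul_of_nonneg_right hθθ₀ (abs_nonneg b)
    linarith [hv]
  have hdenpos : 0 < |b + (s:ℝ) * v| := lt_of_lt_of_le (mul_pos h1θ₀ hbpos) hden
  have hbne : b ≠ 0 := by intro h; rw [h] at hb1; simp at hb1; linarith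
  have hbsvne : b + (s:ℝ) * v ≠ 0 := fun h => by rw [h] at hdenpos; simp at hdenpos
  -- key algebraic identity
  have key : (a + (s:ℝ) * u) / (b + (s:ℝ) * v) - a / b
      = ((s:ℝ) * (u * b - a * v)) / (b * (b + (s:ℝ) * v)) := by
    field_simp
    ring
  rw [key, abs_div]
  have hnum : |(s:ℝ) * (u * b - a * v)| ≤ 2 * θ * |b|^2 := by
    have hsu : |(s:ℝ) * (u * b - a * v)| = |u * b - a * v| := by
      rcases hs with h | h <;> rw [h] <;> simp [abs_mul, abs_sub_comm]
    rw [hsu]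
    calc |u * b - a * v| ≤ |u * b| + |a * v| := abs_sub _ _
    _ = |u| * |b| + |a| * |v| := by rw [abs_mul, abs_mul]
    _ ≤ (θ * |b|) * |b| + |b| * (θ * |b|) := by
        have t1 : |u| * |b| ≤ (θ * |b|) * |b| := mul_le_mul_of_nonneg_right hu (abs_nonneg b)
        have t2 : |a| * |v| ≤ |b| * (θ * |b|) := mul_le_mul hab hv (abs_nonneg v) (abs_nonneg b)
        linarith
    _ = 2 * θ * |b|^2 := by ring
  have hdd : (1 - θ₀) * |b|^2 ≤ |b * (b + (s:ℝ) * v)| := by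
    rw [abs_mul]
    calc (1 - θ₀) * |b|^2 = |b| * ((1 - θ₀) * |b|) := by ring
    _ ≤ |b| * |b + (s:ℝ) * v| := mul_le_mul_of_nonneg_left hden (abs_nonneg b)
  calc |(s:ℝ) * (u * b - a * v)| / |b * (b + (s:ℝ) * v)|
      ≤ (2 * θ * |b|^2) / ((1 - θ₀) * |b|^2) :=
        div_le_div₀ (mul_nonneg (mul_nonneg (by norm_num) hθpos.le) (pow_nonneg (abs_nonneg b) 2))
          hnum (mul_pos h1θ₀ (pow_pos hbpos 2)) hdd
  _ = 2 * θ / (1 - θ₀) := by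
      rw [mul_comm (1 - θ₀) (|b|^2), mul_comm (2 * θ) (|b|^2), mul_div_mul_left _ _ (by positivity : |b|^2 ≠ 0)]
  _ = 3 * Real.sqrt d / (1 - θ₀) / 3^N := by
      have hne : (1 - θ₀) ≠ 0 := ne_of_gt h1θ₀
      have h3ne : ((3:ℝ)^N) ≠ 0 := ne_of_gt h3Npos
      rw [hθdef]
      field_simp


end
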